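/- arXiv:1011.2267 — 3 statements merged into one kernel-verified Lean document; each statement's English description precedes it below -/
import Mathlib

section
/- Let r : [t₀,∞) → ℝ be differentiable and satisfy r'(t) = 1 - 2M/r(t) + E(t) with |E(t)| ≤ C r(t)^{-2}, r(t₀) > 4M > 0, and r(t) → ∞ as t → ∞. Then r(t) = t - 2M log t + O(1) as t → ∞. -/
/-!
Along a solution, `r + 2M log r - t` has derivative `r' (1 + 2M/r) - 1 = -(2M/r)² + E (1 + 2M/r)`,
which is `O(r⁻²)`. Since `r' → 1`, the radius grows linearly, `t/2 ≤ r ≤ 2t`, so this derivative is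
`O(t⁻²)`, integrable at infinity, and `r + 2M log r - t` stays bounded. Linear growth also keeps
`log r - log t` bounded.
-/

open Filter Topology Asymptotics Set

theorem eventually_mul_le_of_tendsto_deriv {f f' : ℝ → ℝ} {L c : ℝ}
    (hf : ∀ᶠ t in atTop, HasDerivAt f (f' t) t) (hf' : Tendsto f' atTop (𝓝 L)) (hc : c < L) :
    ∀ᶠ t in atTop, c * t ≤ f t := by
  obtain ⟨c', hcc', hc'L⟩ := exists_between hc
  obtain ⟨a, ha⟩ := eventually_atTop.1 (hf.and (hf'.eventually_const_le hc'L))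
  have hslope : ∀ t ≥ a, c' * (t - a) ≤ f t - f a := by
    refine fun t ht => (convex_Ici a).mul_sub_le_image_sub_of_le_deriv
      (fun x hx => (ha x hx).1.continuousAt.continuousWithinAt)
      (fun x hx => (ha x (interior_subset hx)).1.differentiableAt.differentiableWithinAt)
      (fun x hx => ?_) a self_mem_Ici t ht ht
    rw [(ha x (interior_subset hx)).1.deriv]
    exact (ha x (interior_subset hx)).2
  filter_upwards [eventually_ge_atTop a, eventually_ge_atTop ((c' * a - f a) / (c' - c))]
    with t hta ht
  rw [div_le_iff₀ (by linarith)] at ht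
  linarith [hslope t hta]

theorem eventually_le_mul_of_tendsto_deriv {f f' : ℝ → ℝ} {L d : ℝ}
    (hf : ∀ᶠ t in atTop, HasDerivAt f (f' t) t) (hf' : Tendsto f' atTop (𝓝 L)) (hd : L < d) :
    ∀ᶠ t in atTop, f t ≤ d * t := by
  have := eventually_mul_le_of_tendsto_deriv (hf.mono fun t ht => ht.neg) hf'.neg
    (neg_lt_neg hd)
  filter_upwards [this] with t ht
  simp only [Pi.neg_apply] at ht
  linarith

theorem isBigO_inv_of_eventually_mul_le {r : ℝ → ℝ} {c : ℝ} (hc : 0 < c)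
    (hr : ∀ᶠ t in atTop, c * t ≤ r t) : (fun t => (r t)⁻¹) =O[atTop] fun t => t⁻¹ := by
  refine IsBigO.of_bound c⁻¹ ?_
  filter_upwards [hr, eventually_gt_atTop 0] with t ht htpos
  have hrpos : 0 < r t := lt_of_lt_of_le (by positivity) ht
  rw [Real.norm_of_nonneg (by positivity), Real.norm_of_nonneg (by positivity), ← mul_inv]
  exact inv_anti₀ (by positivity) ht

theorem isBigO_one_of_deriv_isBigO_inv_sq {E : Type*} [NormedAddCommGroup E] [NormedSpace ℝ E]
    {f f' : ℝ → E} (hf : ∀ᶠ t in atTop, HasDerivAt f (f' t) t)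
    (hf' : f' =O[atTop] fun t => t⁻¹ ^ 2) : f =O[atTop] fun _ => (1 : ℝ) := by
  obtain ⟨K, hK0, hK⟩ := hf'.exists_pos
  obtain ⟨a, ha⟩ := eventually_atTop.1 (hf.and (hK.bound.and (eventually_gt_atTop 0)))
  -- `‖f‖` is fenced by `B`, whose derivative `K s⁻²` dominates `‖f'‖`
  set B : ℝ → ℝ := fun s => ‖f a‖ + K * (a⁻¹ - s⁻¹)
  have hB : ∀ s ≥ a, HasDerivAt B (K * s⁻¹ ^ 2) s := fun s hs => by
    have := (((hasDerivAt_inv (ha s hs).2.2.ne').const_sub a⁻¹).const_mul K).const_add ‖f a‖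
    rwa [neg_neg, ← inv_pow] at this
  refine IsBigO.of_bound (‖f a‖ + K * a⁻¹) ?_
  filter_upwards [eventually_ge_atTop a] with t ht
  have hfence : ‖f t‖ ≤ B t := image_norm_le_of_norm_deriv_right_le_deriv_boundary'
    (fun s hs => (ha s hs.1).1.continuousAt.continuousWithinAt)
    (fun s hs => (ha s hs.1).1.hasDerivWithinAt) (by simp [B])
    (fun s hs => (hB s hs.1).continuousAt.continuousWithinAt)
    (fun s hs => (hB s hs.1).hasDerivWithinAt)
    (fun s hs => by simpa [abs_of_pos (ha s hs.1).2.2] using (ha s hs.1).2.1) ⟨ht, le_rfl⟩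
  have ht0 : 0 < t⁻¹ := inv_pos.2 (ha t ht).2.2
  simp only [norm_one, mul_one]
  exact hfence.trans (by simp only [B]; nlinarith)

theorem isBigO_log_sub_log_of_eventually_mul_le {r : ℝ → ℝ} {c d : ℝ} (hc : 0 < c)
    (hlow : ∀ᶠ t in atTop, c * t ≤ r t) (hup : ∀ᶠ t in atTop, r t ≤ d * t) :
    (fun t => Real.log (r t) - Real.log t) =O[atTop] fun _ => (1 : ℝ) := by
  refine IsBigO.of_bound (|Real.log c| + |Real.log d|) ?_
  filter_upwards [hlow, hup, eventually_gt_atTop 0] with t hlow hup ht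
  have hct : 0 < c * t := by positivity
  have hd : 0 < d := pos_of_mul_pos_left (hct.trans_le (hlow.trans hup)) ht.le
  have hlog_low := Real.log_le_log hct hlow
  have hlog_up := Real.log_le_log (hct.trans_le hlow) hup
  rw [Real.log_mul hc.ne' ht.ne'] at hlog_low
  rw [Real.log_mul hd.ne' ht.ne'] at hlog_up
  rw [norm_one, mul_one, Real.norm_eq_abs, abs_le]
  constructor <;> linarith [neg_abs_le (Real.log c), le_abs_self (Real.log d),
    abs_nonneg (Real.log c), abs_nonneg (Real.log d)]

/-- Up to a constant and `O(1/x)`, this is the tortoise coordinate `x + 2M log (x/2M - 1)` of the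
Schwarzschild metric. -/
noncomputable def tortoise (M x : ℝ) : ℝ := x + 2 * M * Real.log x

theorem hasDerivAt_tortoise (M : ℝ) {x : ℝ} (hx : x ≠ 0) :
    HasDerivAt (tortoise M) (1 + 2 * M / x) x := by
  have := (hasDerivAt_id' x).add ((Real.hasDerivAt_log hx).const_mul (2 * M))
  rwa [← div_eq_mul_inv] at this

section

variable (M : ℝ) {r E : ℝ → ℝ}

theorem tendsto_one_sub_div_add (hinf : Tendsto r atTop atTop)
    (hE : E =O[atTop] fun t => (r t)⁻¹ ^ 2) :
    Tendsto (fun t => 1 - 2 * M / r t + E t) atTop (𝓝 1) := by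
  have hinv : Tendsto (fun t => (r t)⁻¹) atTop (𝓝 0) := tendsto_inv_atTop_zero.comp hinf
  have hE0 : Tendsto E atTop (𝓝 0) := hE.trans_tendsto (by simpa using hinv.pow 2)
  simpa [div_eq_mul_inv] using ((hinv.const_mul (2 * M)).const_sub 1).add hE0

theorem isBigO_one_sub_div_add_mul_one_add_div_sub_one (hinf : Tendsto r atTop atTop)
    (hE : E =O[atTop] fun t => (r t)⁻¹ ^ 2) :
    (fun t => (1 - 2 * M / r t + E t) * (1 + 2 * M / r t) - 1) =O[atTop]
      fun t => (r t)⁻¹ ^ 2 := by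
  have hexpand : (fun t => (1 - 2 * M / r t + E t) * (1 + 2 * M / r t) - 1) =
      fun t => -(2 * M) ^ 2 * (r t)⁻¹ ^ 2 + E t * (1 + 2 * M / r t) := by
    funext t; ring
  have hbdd : Tendsto (fun t => 1 + 2 * M / r t) atTop (𝓝 1) := by
    simpa [div_eq_mul_inv] using ((tendsto_inv_atTop_zero.comp hinf).const_mul (2 * M)).const_add 1
  rw [hexpand]
  exact ((isBigO_refl _ _).const_mul_left _).add (by simpa using hE.mul (hbdd.isBigO_one ℝ))

end

theorem area_radius_asymptotics_general (M C t₀ : ℝ)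
    (r E : ℝ → ℝ)
    (hE : ∀ t ≥ t₀, |E t| ≤ C * (r t)⁻¹ ^ 2)
    (hderiv : ∀ t ≥ t₀, HasDerivAt r (1 - 2 * M / r t + E t) t)
    (hinf : Tendsto r atTop atTop) :
    ∃ B : ℝ, ∀ᶠ t in atTop, |r t - (t - 2 * M * Real.log t)| ≤ B := by
  have hE' : E =O[atTop] fun t => (r t)⁻¹ ^ 2 :=
    IsBigO.of_bound C ((eventually_ge_atTop t₀).mono fun t ht => by simpa using hE t ht)
  have hr' := (eventually_ge_atTop t₀).mono hderiv
  have hrhs := tendsto_one_sub_div_add M hinf hE'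
  have hlow := eventually_mul_le_of_tendsto_deriv hr' hrhs (by norm_num : (2 : ℝ)⁻¹ < 1)
  have hup := eventually_le_mul_of_tendsto_deriv hr' hrhs (by norm_num : (1 : ℝ) < 2)
  have hg : (fun t => tortoise M (r t) - t) =O[atTop] fun _ => (1 : ℝ) := by
    refine isBigO_one_of_deriv_isBigO_inv_sq ?_ ((isBigO_one_sub_div_add_mul_one_add_div_sub_one M
      hinf hE').trans ((isBigO_inv_of_eventually_mul_le (by norm_num) hlow).pow 2))
    filter_upwards [hr', hinf.eventually_gt_atTop 0] with t ht hrt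
    exact (((hasDerivAt_tortoise M hrt.ne').comp t ht).sub (hasDerivAt_id' t)).congr_deriv
      (by ring)
  have hlog := isBigO_log_sub_log_of_eventually_mul_le (by norm_num) hlow hup
  obtain ⟨B, hB⟩ := (hg.sub (hlog.const_mul_left (2 * M))).bound
  refine ⟨B, hB.mono fun t ht => ?_⟩
  have hsplit : r t - (t - 2 * M * Real.log t) =
      tortoise M (r t) - t - 2 * M * (Real.log (r t) - Real.log t) := by
    unfold tortoise; ring
  simpa [hsplit] using ht

/-- If `r' = 1 - 2M/r + E` with `|E(t)| ≤ C r(t)⁻²`, `r(t₀) > 4M > 0` and `r → ∞`,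
then `r(t) = t - 2M log t + O(1)` as `t → ∞`. -/
theorem area_radius_asymptotics (M C t₀ : ℝ) (hM : 0 < M) (hC : 0 < C)
    (r E : ℝ → ℝ)
    (hrpos : ∀ t ≥ t₀, 0 < r t)
    (hr0 : 4 * M < r t₀)
    (hE : ∀ t ≥ t₀, |E t| ≤ C * (r t)⁻¹ ^ 2)
    (hderiv : ∀ t ≥ t₀, HasDerivAt r (1 - 2 * M / r t + E t) t)
    (hinf : Tendsto r atTop atTop) :
    ∃ B : ℝ, ∀ᶠ t in atTop, |r t - (t - 2 * M * Real.log t)| ≤ B :=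
  area_radius_asymptotics_general M C t₀ r E hE hderiv hinf
end

section
/- Let x : ℝ → ℝ² be twice differentiable with ẍ(t) = (d₀/r)·(-1/4)·A(t)·e, where A : ℝ → M₂(ℝ) takes values in symmetric traceless matrices with A = -4Ξ', Ξ(t) → 0 as t → ±∞, Ξ = -Σ', Σ(t) → Σ^∓ as t → ∓∞, and initial conditions x(t) → d₀ e, ẋ(t) → 0 as t → -∞ (e a fixed unit vector). Then ẋ(t) = (d₀/r)Ξ(t)e for all t, ẋ(t) → 0 as t → +∞, and the permanent displacement is lim_{t→∞} x(t) - d₀ e = -(d₀/r) (Σ⁺ - Σ⁻) e. -/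
/-!
Both conclusions come from one principle: two antiderivatives of the same function on `ℝ`
differ by a constant, which is read off from their limits at `-∞`. The map
`M ↦ (d₀/r) • M e` is continuous linear, so `x'` and `(d₀/r) • Ξ e` have the same derivative and
both vanish at `-∞`; then `x` and `-(d₀/r) • Σ e` have the same derivative, which fixes `x` up to
the constant `d₀ e + (d₀/r) Σ⁻ e`, and letting `t → +∞` gives the displacement.
-/

open Filter Topology

section Antiderivative

variable {E : Type*} [NormedAddCommGroup E] [NormedSpace ℝ E]

theorem eq_add_sub_of_hasDerivAt_of_tendsto_atBot {f g f' : ℝ → E} {a b : E}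
    (hf : ∀ t, HasDerivAt f (f' t) t) (hg : ∀ t, HasDerivAt g (f' t) t)
    (ha : Tendsto f atBot (𝓝 a)) (hb : Tendsto g atBot (𝓝 b)) (t : ℝ) :
    f t = g t + (a - b) := by
  have hdiff : ∀ s, HasDerivAt (f - g) 0 s := fun s => by
    simpa using (hf s).sub (hg s)
  have hconst : ∀ s, (f - g) s = (f - g) 0 := fun s =>
    is_const_of_deriv_eq_zero (fun s => (hdiff s).differentiableAt) (fun s => (hdiff s).deriv) s 0
  have hlim : (f - g) 0 = a - b :=
    tendsto_nhds_unique tendsto_const_nhds ((ha.sub hb).congr hconst)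
  rw [← hlim, ← hconst t, Pi.sub_apply, add_sub_cancel]

end Antiderivative

noncomputable def mulVecCLM {m n : Type*} [Fintype m] [Fintype n] (e : n → ℝ) :
    (m → n → ℝ) →L[ℝ] (m → ℝ) :=
  LinearMap.toContinuousLinearMap ((Matrix.mulVecBilin ℝ ℝ).flip e)

theorem mulVecCLM_apply {m n : Type*} [Fintype m] [Fintype n] (e : n → ℝ) (M : m → n → ℝ) :
    mulVecCLM e M = fun i => ∑ j, M i j * e j :=
  rfl

theorem permanent_displacement_general (d₀ r : ℝ)
    (A Ξ Sg : ℝ → Fin 2 → Fin 2 → ℝ) (Sp Sm : Fin 2 → Fin 2 → ℝ)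
    (e : Fin 2 → ℝ)
    (hΞderiv : ∀ t, HasDerivAt Ξ (-(1/4 : ℝ) • A t) t)
    (hSderiv : ∀ t, HasDerivAt Sg (-(Ξ t)) t)
    (hΞtop : Tendsto Ξ atTop (nhds 0)) (hΞbot : Tendsto Ξ atBot (nhds 0))
    (hStop : Tendsto Sg atTop (nhds Sp)) (hSbot : Tendsto Sg atBot (nhds Sm))
    (x x' : ℝ → Fin 2 → ℝ)
    (hx : ∀ t, HasDerivAt x (x' t) t)
    (hx' : ∀ t, HasDerivAt x'
      ((d₀ / r) • (-(1/4 : ℝ)) • (fun i => ∑ j, A t i j * e j)) t)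
    (hxbot : Tendsto x atBot (nhds (d₀ • e)))
    (hx'bot : Tendsto x' atBot (nhds 0)) :
    (∀ t, x' t = (d₀ / r) • fun i => ∑ j, Ξ t i j * e j) ∧
    Tendsto x' atTop (nhds 0) ∧
    Tendsto x atTop
      (nhds (d₀ • e - (d₀ / r) • fun i => ∑ j, (Sp - Sm) i j * e j)) := by
  set L := (d₀ / r) • mulVecCLM (m := Fin 2) e
  have hLΞ : ∀ t, HasDerivAt (L ∘ Ξ) ((d₀ / r) • (-(1/4 : ℝ)) • mulVecCLM e (A t)) t :=
    fun t => by
      simpa [L, smul_comm (d₀ / r)] using L.hasFDerivAt.comp_hasDerivAt t (hΞderiv t)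
  have hvel : ∀ t, x' t = L (Ξ t) := fun t => by
    simpa using eq_add_sub_of_hasDerivAt_of_tendsto_atBot hx' hLΞ hx'bot
      ((L.continuous.tendsto 0).comp hΞbot) t
  have hLSg : ∀ t, HasDerivAt (-(L ∘ Sg)) (x' t) t := fun t => by
    simpa [hvel t] using (L.hasFDerivAt.comp_hasDerivAt t (hSderiv t)).neg
  have hpos : ∀ t, x t = -L (Sg t) + (d₀ • e + L Sm) := fun t => by
    simpa using eq_add_sub_of_hasDerivAt_of_tendsto_atBot hx hLSg hxbot
      ((L.continuous.tendsto Sm).comp hSbot).neg t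
  refine ⟨hvel, ?_, ?_⟩
  · simpa using (tendsto_congr hvel).2 ((L.continuous.tendsto 0).comp hΞtop)
  · convert (tendsto_congr hpos).2
      (((L.continuous.tendsto Sp).comp hStop).neg.add_const (d₀ • e + L Sm)) using 2
    rw [← mulVecCLM_apply, ← smul_apply, map_sub]
    abel

/-- Test-mass motion in the wave experiment: if `ẍ = (d₀/r)·(-1/4)·A·e` with `A = -4Ξ'`,
`Ξ → 0` at `±∞`, `Ξ = -Σ'`, `Σ → Σ^∓` at `∓∞`, and `x → d₀e`, `ẋ → 0` as `t → -∞`, then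
`ẋ(t) = (d₀/r)Ξ(t)e` for all `t`, `ẋ → 0` at `+∞`, and the permanent displacement is
`lim x - d₀e = -(d₀/r)(Σ⁺ - Σ⁻)e`. -/
theorem permanent_displacement (d₀ r : ℝ) (hd : 0 < d₀) (hr : 0 < r)
    (A Ξ Sg : ℝ → Fin 2 → Fin 2 → ℝ) (Sp Sm : Fin 2 → Fin 2 → ℝ)
    (e : Fin 2 → ℝ) (he : (e 0)^2 + (e 1)^2 = 1)
    (hAcont : Continuous A)
    (hΞderiv : ∀ t, HasDerivAt Ξ (-(1/4 : ℝ) • A t) t)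
    (hSderiv : ∀ t, HasDerivAt Sg (-(Ξ t)) t)
    (hΞtop : Tendsto Ξ atTop (nhds 0)) (hΞbot : Tendsto Ξ atBot (nhds 0))
    (hStop : Tendsto Sg atTop (nhds Sp)) (hSbot : Tendsto Sg atBot (nhds Sm))
    (x x' : ℝ → Fin 2 → ℝ)
    (hx : ∀ t, HasDerivAt x (x' t) t)
    (hx' : ∀ t, HasDerivAt x'
      ((d₀ / r) • (-(1/4 : ℝ)) • (fun i => ∑ j, A t i j * e j)) t)
    (hxbot : Tendsto x atBot (nhds (d₀ • e)))
    (hx'bot : Tendsto x' atBot (nhds 0)) :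
    (∀ t, x' t = (d₀ / r) • fun i => ∑ j, Ξ t i j * e j) ∧
    Tendsto x' atTop (nhds 0) ∧
    Tendsto x atTop
      (nhds (d₀ • e - (d₀ / r) • fun i => ∑ j, (Sp - Sm) i j * e j)) :=
  permanent_displacement_general d₀ r A Ξ Sg Sp Sm e hΞderiv hSderiv hΞtop hΞbot hStop hSbot x x' hx
    hx' hxbot hx'bot
end

section
/- If χ̂ satisfies the propagation equation dχ̂/ds = -(tr χ) χ̂ - α along an affinely parametrized null geodesic generator, with tr χ = 2/s + O(s^{-2}) and |α(s)| ≤ C s^{-7/2}, then s² χ̂(s) converges to a limit as s → ∞. -/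
/-!
Put `u = s² χ̂`. The propagation equation becomes the linear equation
`u' = (2/s - tr χ) u - s² α`, whose coefficient is `O(s⁻²)` and whose forcing term is
`O(s^{-3/2})`, both integrable at infinity. A primitive `h` of the coefficient is bounded and
converges, and `(e^{-h} u)' = -e^{-h} s² α` is integrable, so `e^{-h} u`, and with it `u`,
converges.
-/

open Filter Set MeasureTheory Topology

section

variable {E : Type*} [NormedAddCommGroup E]

lemma integrableOn_Ioi_of_norm_le_rpow {f : ℝ → E} {a K p : ℝ} (ha : 0 < a) (hp : p < -1)
    (hf : ContinuousOn f (Ioi a)) (hbound : ∀ t > a, ‖f t‖ ≤ K * t ^ p) :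
    IntegrableOn f (Ioi a) :=
  ((integrableOn_Ioi_rpow_of_lt hp ha).const_mul K).mono'
    (hf.aestronglyMeasurable measurableSet_Ioi) ((ae_restrict_mem measurableSet_Ioi).mono hbound)

variable [NormedSpace ℝ E]

lemma norm_intervalIntegral_le_integral_norm_Ioi {g : ℝ → E} {a s : ℝ}
    (hg : IntegrableOn g (Ioi a)) (has : a ≤ s) :
    ‖∫ t in a..s, g t‖ ≤ ∫ t in Ioi a, ‖g t‖ :=
  calc ‖∫ t in a..s, g t‖ ≤ ∫ t in a..s, ‖g t‖ :=
        intervalIntegral.norm_integral_le_integral_norm has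
    _ = ∫ t in Ioc a s, ‖g t‖ := intervalIntegral.integral_of_le has
    _ ≤ ∫ t in Ioi a, ‖g t‖ :=
      setIntegral_mono_set hg.norm (ae_of_all _ fun _ => norm_nonneg _)
        Ioc_subset_Ioi_self.eventuallyLE

lemma hasDerivAt_sq_smul {χ α : ℝ → E} {τ s : ℝ} (hs : s ≠ 0)
    (hχ : HasDerivAt χ (-τ • χ s - α s) s) :
    HasDerivAt (fun s => s ^ 2 • χ s) ((2 / s - τ) • s ^ 2 • χ s + -(s ^ 2 • α s)) s := by
  refine ((hasDerivAt_pow 2 s).smul hχ).congr_deriv ?_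
  match_scalars <;> field_simp; ring

variable [CompleteSpace E]

lemma hasDerivAt_intervalIntegral_of_integrableOn_Ioi {g : ℝ → E} {a s : ℝ}
    (hg : IntegrableOn g (Ioi a)) (hgc : ContinuousOn g (Ioi a)) (hs : a < s) :
    HasDerivAt (fun x => ∫ t in a..x, g t) (g s) s :=
  intervalIntegral.integral_hasDerivAt_right
    ((intervalIntegrable_iff_integrableOn_Ioc_of_le hs.le).2 (hg.mono_set Ioc_subset_Ioi_self))
    (hgc.stronglyMeasurableAtFilter isOpen_Ioi s hs) (hgc.continuousAt (Ioi_mem_nhds hs))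

theorem exists_tendsto_of_hasDerivAt_eq_smul_add {u β : ℝ → E} {g : ℝ → ℝ} {a : ℝ}
    (hu : ∀ s > a, HasDerivAt u (g s • u s + β s) s) (hg : IntegrableOn g (Ioi a))
    (hgc : ContinuousOn g (Ioi a)) (hβ : IntegrableOn β (Ioi a)) :
    ∃ L, Tendsto u atTop (𝓝 L) := by
  set h : ℝ → ℝ := fun x => ∫ t in a..x, g t
  have hh : ∀ s > a, HasDerivAt h (g s) s := fun s hs =>
    hasDerivAt_intervalIntegral_of_integrableOn_Ioi hg hgc hs
  set w : ℝ → E := fun s => Real.exp (-h s) • u s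
  have hw : ∀ s ∈ Ioi a, HasDerivAt w (Real.exp (-h s) • β s) s := by
    intro s hs
    refine ((hh s hs).neg.exp.smul (hu s hs)).congr_deriv ?_
    simp only [Pi.neg_apply]
    module
  have hw_int : IntegrableOn (fun s => Real.exp (-h s) • β s) (Ioi a) := by
    refine hβ.bdd_smul (Real.exp (∫ t in Ioi a, ‖g t‖)) ?_ ?_
    · exact ContinuousOn.aestronglyMeasurable
        (fun s hs => (hh s hs).continuousAt.continuousWithinAt.neg.rexp) measurableSet_Ioi
    · refine (ae_restrict_mem measurableSet_Ioi).mono fun s hs => ?_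
      rw [Real.norm_of_nonneg (Real.exp_pos _).le, Real.exp_le_exp]
      exact (neg_le_abs _).trans (norm_intervalIntegral_le_integral_norm_Ioi hg (le_of_lt hs))
  have hh_lim := intervalIntegral_tendsto_integral_Ioi a hg tendsto_id
  have hw_lim := tendsto_limUnder_of_hasDerivAt_of_integrableOn_Ioi hw hw_int
  refine ⟨Real.exp (∫ t in Ioi a, g t) • limUnder atTop w,
    (((Real.continuous_exp.tendsto _).comp hh_lim).smul hw_lim).congr fun s => ?_⟩
  simp [w, h, smul_smul, ← Real.exp_add]

end

theorem normalized_shear_limit_general {V : Type*} [NormedAddCommGroup V] [NormedSpace ℝ V]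
    [FiniteDimensional ℝ V]
    (s₀ C : ℝ) (hs₀ : 0 < s₀)
    (χ : ℝ → V) (trχ : ℝ → ℝ) (α : ℝ → V)
    (htrcont : ContinuousOn trχ (Set.Ici s₀))
    (hαcont : ContinuousOn α (Set.Ici s₀))
    (hderiv : ∀ s ≥ s₀, HasDerivAt χ (-(trχ s) • χ s - α s) s)
    (htr : ∀ s ≥ s₀, |trχ s - 2 / s| ≤ C / s ^ 2)
    (hα : ∀ s ≥ s₀, ‖α s‖ ≤ C * s ^ (-(7:ℝ)/2)) :
    ∃ L : V, Tendsto (fun s => s ^ 2 • χ s) atTop (nhds L) := by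
  have hg : ContinuousOn (fun s => 2 / s - trχ s) (Ioi s₀) :=
    (continuousOn_const.div continuousOn_id fun s hs => (hs₀.trans hs).ne').sub
      (htrcont.mono Ioi_subset_Ici_self)
  refine exists_tendsto_of_hasDerivAt_eq_smul_add
    (fun s hs => hasDerivAt_sq_smul (hs₀.trans hs).ne' (hderiv s hs.le)) ?_ hg ?_
  · refine integrableOn_Ioi_of_norm_le_rpow hs₀ (K := C) (p := -2) (by norm_num) hg fun t ht => ?_
    rw [Real.norm_eq_abs, abs_sub_comm, Real.rpow_neg (hs₀.trans ht).le, Real.rpow_two,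
      ← div_eq_mul_inv]
    exact htr t ht.le
  · refine integrableOn_Ioi_of_norm_le_rpow hs₀ (K := C) (p := -3 / 2) (by norm_num)
      ((continuousOn_pow 2).smul (hαcont.mono Ioi_subset_Ici_self)).neg fun t ht => ?_
    calc ‖-(t ^ 2 • α t)‖ = t ^ 2 * ‖α t‖ := by
          rw [norm_neg, norm_smul, Real.norm_of_nonneg (by positivity)]
      _ ≤ t ^ 2 * (C * t ^ (-(7:ℝ)/2)) := by gcongr; exact hα t ht.le
      _ = C * t ^ (-3 / 2 : ℝ) := by
        rw [← Real.rpow_natCast, mul_left_comm, ← Real.rpow_add (hs₀.trans ht)]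
        norm_num

/-- If `χ̂` satisfies `dχ̂/ds = -(tr χ)χ̂ - α` along a null generator with
`tr χ = 2/s + O(s⁻²)` and `|α(s)| ≤ C s^{-7/2}`, then `s² χ̂(s)` converges as `s → ∞`. -/
theorem normalized_shear_limit {V : Type*} [NormedAddCommGroup V] [NormedSpace ℝ V]
    [FiniteDimensional ℝ V]
    (s₀ C : ℝ) (hs₀ : 0 < s₀) (hC : 0 < C)
    (χ : ℝ → V) (trχ : ℝ → ℝ) (α : ℝ → V)
    (htrcont : ContinuousOn trχ (Set.Ici s₀))
    (hαcont : ContinuousOn α (Set.Ici s₀))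
    (hderiv : ∀ s ≥ s₀, HasDerivAt χ (-(trχ s) • χ s - α s) s)
    (htr : ∀ s ≥ s₀, |trχ s - 2 / s| ≤ C / s ^ 2)
    (hα : ∀ s ≥ s₀, ‖α s‖ ≤ C * s ^ (-(7:ℝ)/2)) :
    ∃ L : V, Tendsto (fun s => s ^ 2 • χ s) atTop (nhds L) :=
  normalized_shear_limit_general s₀ C hs₀ χ trχ α htrcont hαcont hderiv htr hα
end
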